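/- Let Λ be a k-graph with topological realization X_Λ. Then X_Λ = ⋃_{m ≤ 1_k} ⋃_{λ ∈ Λ^m} Q_λ, the sets Q_λ for distinct λ ∈ ⋃_{m ≤ 1_k} Λ^m are pairwise disjoint, and for each m ≤ 1_k and λ ∈ Λ^m the map [λ,t] ↦ t is a homeomorphism of Q_λ onto the relatively open cube (0,m) ⊆ ℝ^k; in particular Q_λ is homeomorphic to the open unit cube in ℝ^{|m|}, where |m| = Σ_i m_i. -/

import Mathlib

/-- A `k`-graph: a countable small category (objects identified with the
identity morphisms, i.e. the morphisms of degree `0`) equipped with a degree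
functor `d : Λ → ℕᵏ` satisfying the unique factorization property. -/
structure KGraph (k : ℕ) where
  /-- The morphisms of the category. -/
  Mor : Type
  /-- The category is countable. -/
  countable : Countable Mor
  /-- The source (domain) of a morphism, viewed as a degree-zero morphism. -/
  src : Mor → Mor
  /-- The range (codomain) of a morphism, viewed as a degree-zero morphism. -/
  rng : Mor → Mor
  /-- Composition `comp a b = a ∘ b`, meaningful when `src a = rng b`. -/
  comp : Mor → Mor → Mor
  /-- The degree functor. -/
  deg : Mor → Fin k → ℕ
  src_src : ∀ a, src (src a) = src a
  rng_src : ∀ a, rng (src a) = src a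
  src_rng : ∀ a, src (rng a) = rng a
  rng_rng : ∀ a, rng (rng a) = rng a
  deg_src : ∀ a, deg (src a) = 0
  deg_rng : ∀ a, deg (rng a) = 0
  src_comp : ∀ a b, src a = rng b → src (comp a b) = src b
  rng_comp : ∀ a b, src a = rng b → rng (comp a b) = rng a
  comp_assoc : ∀ a b c, src a = rng b → src b = rng c →
    comp (comp a b) c = comp a (comp b c)
  id_comp : ∀ a, comp (rng a) a = a
  comp_id : ∀ a, comp a (src a) = a
  deg_comp : ∀ a b, src a = rng b → deg (comp a b) = deg a + deg b
  /-- The unique factorization property. -/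
  factor : ∀ (a : Mor) (m n : Fin k → ℕ), deg a = m + n →
    ∃! p : Mor × Mor, deg p.1 = m ∧ deg p.2 = n ∧ src p.1 = rng p.2 ∧
      comp p.1 p.2 = a

namespace KGraph

variable {k : ℕ} (Λ : KGraph k)

/-- The segment `a(m,n)` of a morphism `a`, i.e. the (unique) middle factor of
`a = a(0,m) a(m,n) a(n, d(a))`; junk value `a` if no such factorization exists. -/
noncomputable def seg (a : Λ.Mor) (m n : Fin k → ℕ) : Λ.Mor :=
  letI := Classical.propDecidable
  if h : ∃ b : Λ.Mor, Λ.deg b = n - m ∧ ∃ x y : Λ.Mor,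
      Λ.deg x = m ∧ Λ.src x = Λ.rng b ∧ Λ.src b = Λ.rng y ∧
      a = Λ.comp x (Λ.comp b y)
  then h.choose else a

/-- The points `⨆_{λ ∈ Λ} {λ} × [0, d(λ)]` of which the topological
realization is a quotient; topologized as a disjoint union of subspaces of `ℝᵏ`. -/
def Points : Type :=
  Σ a : Λ.Mor, { t : Fin k → ℝ // ∀ i, 0 ≤ t i ∧ t i ≤ (Λ.deg a i : ℝ) }

instance : TopologicalSpace Λ.Points :=
  inferInstanceAs (TopologicalSpace
    (Σ a : Λ.Mor, { t : Fin k → ℝ // ∀ i, 0 ≤ t i ∧ t i ≤ (Λ.deg a i : ℝ) }))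

/-- Coordinatewise floor `⌊t⌋` (as a vector of naturals; this is the honest
floor on the relevant region `t ≥ 0`). -/
noncomputable def fl (t : Fin k → ℝ) : Fin k → ℕ := fun i => (⌊t i⌋).toNat

/-- Coordinatewise ceiling `⌈t⌉`. -/
noncomputable def ce (t : Fin k → ℝ) : Fin k → ℕ := fun i => (⌈t i⌉).toNat

/-- The fractional part `t - ⌊t⌋`. -/
noncomputable def frac (t : Fin k → ℝ) : Fin k → ℝ := fun i => t i - ((⌊t i⌋).toNat : ℝ)

/-- The relation `(μ,s) ∼ (ν,t) ⟺ μ(⌊s⌋,⌈s⌉) = ν(⌊t⌋,⌈t⌉)` and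
`s - ⌊s⌋ = t - ⌊t⌋` defining the topological realization. -/
def ptRel : Λ.Points → Λ.Points → Prop := fun p q =>
  Λ.seg p.1 (fl p.2.1) (ce p.2.1) = Λ.seg q.1 (fl q.2.1) (ce q.2.1) ∧
    frac p.2.1 = frac q.2.1

/-- `ptRel` is an equivalence relation. -/
def ptSetoid : Setoid Λ.Points where
  r := Λ.ptRel
  iseqv := ⟨fun _ => ⟨rfl, rfl⟩, fun h => ⟨h.1.symm, h.2.symm⟩,
    fun h h' => ⟨h.1.trans h'.1, h.2.trans h'.2⟩⟩

/-- The topological realization `X_Λ` of the `k`-graph `Λ`. -/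
def Real : Type := Quotient Λ.ptSetoid

instance : TopologicalSpace Λ.Real :=
  inferInstanceAs (TopologicalSpace (Quotient Λ.ptSetoid))

/-- The class `[λ, t] ∈ X_Λ` of a pair `(λ, t)` with `0 ≤ t ≤ d(λ)`. -/
def pt (a : Λ.Mor) (t : Fin k → ℝ) (h : ∀ i, 0 ≤ t i ∧ t i ≤ (Λ.deg a i : ℝ)) :
    Λ.Real :=
  Quotient.mk Λ.ptSetoid ⟨a, ⟨t, h⟩⟩

/-- The open cube `Q_λ = {[λ,t] : t ∈ (0, d(λ))}` of a morphism `λ` (of degree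
`≤ (1,…,1)`). -/
def Qcube (lam : Λ.Mor) : Set Λ.Real :=
  { x | ∃ (t : Fin k → ℝ) (h : ∀ i, 0 ≤ t i ∧ t i ≤ (Λ.deg lam i : ℝ)),
      (∀ i, Λ.deg lam i = 1 → 0 < t i ∧ t i < 1) ∧ x = Λ.pt lam t h }

/-- The `r`-skeleton `X_Λ^r` of the topological realization. -/
def skel' (G : KGraph k) : ℕ → Set G.Real
  | 0 => ⋃ v ∈ { v : G.Mor | G.deg v = 0 }, G.Qcube v
  | (r+1) => skel' G r ∪
      ⋃ lam ∈ { lam : G.Mor | G.deg lam ≤ 1 ∧ ∑ i, G.deg lam i = r + 1 },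
        G.Qcube lam

/-- The `r`-skeleton (wrapper). -/
def skel (r : ℕ) : Set Λ.Real := skel' Λ r

/-- A `k`-graph is connected if any two vertices are joined by an undirected
path of morphisms. -/
def Connected : Prop :=
  ∀ u v : Λ.Mor, Λ.deg u = 0 → Λ.deg v = 0 →
    Relation.ReflTransGen (fun x y => ∃ e : Λ.Mor,
      (Λ.src e = x ∧ Λ.rng e = y) ∨ (Λ.src e = y ∧ Λ.rng e = x)) u v

end KGraph

/-- A morphism of `k`-graphs: a degree-preserving functor. -/
@[ext]
structure KGraphHom {k : ℕ} (Λ Γ : KGraph k) where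
  toFun : Λ.Mor → Γ.Mor
  map_src : ∀ a, toFun (Λ.src a) = Γ.src (toFun a)
  map_rng : ∀ a, toFun (Λ.rng a) = Γ.rng (toFun a)
  map_comp : ∀ a b, Λ.src a = Λ.rng b →
    toFun (Λ.comp a b) = Γ.comp (toFun a) (toFun b)
  map_deg : ∀ a, Γ.deg (toFun a) = Λ.deg a

namespace KGraphHom

variable {k : ℕ} {Λ Γ Θ : KGraph k}

/-- The identity `k`-graph morphism. -/
def id (Λ : KGraph k) : KGraphHom Λ Λ :=
  ⟨fun a => a, fun _ => rfl, fun _ => rfl, fun _ _ _ => rfl, fun _ => rfl⟩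

/-- Composition of `k`-graph morphisms. -/
def comp (ψ : KGraphHom Γ Θ) (φ : KGraphHom Λ Γ) : KGraphHom Λ Θ where
  toFun := ψ.toFun ∘ φ.toFun
  map_src a := by simp [Function.comp, φ.map_src, ψ.map_src]
  map_rng a := by simp [Function.comp, φ.map_rng, ψ.map_rng]
  map_comp a b h := by
    simp only [Function.comp]
    rw [φ.map_comp a b h, ψ.map_comp _ _ (by rw [← φ.map_src, ← φ.map_rng, h])]
  map_deg a := by simp [Function.comp, φ.map_deg, ψ.map_deg]

/-- The induced map on points `(λ, t) ↦ (φ(λ), t)`. -/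
def pointMap (φ : KGraphHom Λ Γ) : Λ.Points → Γ.Points :=
  fun p => ⟨φ.toFun p.1, ⟨p.2.1, fun i => by rw [φ.map_deg]; exact p.2.2 i⟩⟩

/-- The induced map `φ̃ : X_Λ → X_Γ` on topological realizations,
`φ̃([λ,t]) = [φ(λ), t]` (defined via choice of representatives). -/
noncomputable def real (φ : KGraphHom Λ Γ) : Λ.Real → Γ.Real :=
  fun x => Quotient.mk Γ.ptSetoid (φ.pointMap (Quotient.out x))

end KGraphHom

/-- A covering of `k`-graphs: a surjective degree-preserving functor
`p : Ω → Λ` mapping `Ωv` bijectively onto `Λp(v)` and `vΩ` bijectively onto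
`p(v)Λ` for every vertex `v` of `Ω`. -/
def KGraphHom.IsCovering {k : ℕ} {Ω Λ : KGraph k} (p : KGraphHom Ω Λ) : Prop :=
  Function.Surjective p.toFun ∧
    ∀ v : Ω.Mor, Ω.deg v = 0 →
      Set.BijOn p.toFun { a | Ω.src a = v } { b | Λ.src b = p.toFun v } ∧
      Set.BijOn p.toFun { a | Ω.rng a = v } { b | Λ.rng b = p.toFun v }

/-!
Every point `[μ, s]` equals `[μ(⌊s⌋, ⌈s⌉), s - ⌊s⌋]`: the segment has degree `⌈s⌉ - ⌊s⌋ ≤ 1_k`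
and `s - ⌊s⌋` lies in its open cube. Conversely, for `t` in the open cube of `λ` with
`d(λ) ≤ 1_k` we have `⌊t⌋ = 0` and `⌈t⌉ = d(λ)`, so `[λ, t]` determines `λ = λ(⌊t⌋, ⌈t⌉)` and
`t = t - ⌊t⌋`; this gives the partition.

The coordinates of a point are only well defined modulo `ℤ`, but as such they vary continuously:
`[μ, s] ↦ (s mod ℤ)` is a continuous map `X_Λ → (ℝ/ℤ)ᵏ`. On `Q_λ` the coordinates where
`d(λ)_i = 1` stay away from `0 mod ℤ`, where the inverse `ℝ/ℤ → [0, 1)` is continuous, and the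
other coordinates vanish; this inverts `t ↦ [λ, t]` continuously.
-/

namespace KGraph

variable {k : ℕ}

open Set

section Factorization

variable (Λ : KGraph k)

theorem eq_of_comp_eq_comp {x y x' y' : Λ.Mor} (hdeg : Λ.deg x = Λ.deg x')
    (h : Λ.src x = Λ.rng y) (h' : Λ.src x' = Λ.rng y')
    (heq : Λ.comp x y = Λ.comp x' y') : x = x' ∧ y = y' := by
  have hy : Λ.deg y' = Λ.deg y := by
    have := (Λ.deg_comp x' y' h').symm.trans (heq ▸ Λ.deg_comp x y h)
    rw [hdeg] at this
    exact add_left_cancel this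
  have := (Λ.factor _ _ _ (Λ.deg_comp x y h)).unique
    (y₁ := (x, y)) (y₂ := (x', y')) ⟨rfl, rfl, h, rfl⟩ ⟨hdeg.symm, hy, h', heq.symm⟩
  exact Prod.ext_iff.mp this

theorem seg_eq_of_eq_comp {a b x y : Λ.Mor} {m n : Fin k → ℕ} (hx : Λ.deg x = m)
    (hb : Λ.deg b = n - m) (hxb : Λ.src x = Λ.rng b) (hby : Λ.src b = Λ.rng y)
    (ha : a = Λ.comp x (Λ.comp b y)) : Λ.seg a m n = b := by
  have hex : ∃ b' : Λ.Mor, Λ.deg b' = n - m ∧ ∃ x' y' : Λ.Mor,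
      Λ.deg x' = m ∧ Λ.src x' = Λ.rng b' ∧ Λ.src b' = Λ.rng y' ∧
      a = Λ.comp x' (Λ.comp b' y') := ⟨b, hb, x, y, hx, hxb, hby, ha⟩
  rw [seg, dif_pos hex]
  obtain ⟨hb', x', y', hx', hxb', hby', ha'⟩ := hex.choose_spec
  have hby_eq : Λ.comp hex.choose y' = Λ.comp b y :=
    (Λ.eq_of_comp_eq_comp (hx'.trans hx.symm)
      (by rwa [Λ.rng_comp _ _ hby']) (by rwa [Λ.rng_comp _ _ hby]) (ha'.symm.trans ha)).2
  exact (Λ.eq_of_comp_eq_comp (hb'.trans hb.symm) hby' hby hby_eq).1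

theorem seg_zero_deg (b : Λ.Mor) : Λ.seg b 0 (Λ.deg b) = b :=
  Λ.seg_eq_of_eq_comp (Λ.deg_rng b) (tsub_zero _).symm (Λ.src_rng b) (Λ.rng_src b).symm
    (by rw [Λ.comp_id, Λ.id_comp])

theorem deg_seg {a : Λ.Mor} {m n : Fin k → ℕ} (hmn : m ≤ n) (hn : n ≤ Λ.deg a) :
    Λ.deg (Λ.seg a m n) = n - m := by
  obtain ⟨⟨x, c⟩, ⟨hx, hc, hxc, rfl⟩, -⟩ :=
    Λ.factor a m (Λ.deg a - m) (add_tsub_cancel_of_le (hmn.trans hn)).symm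
  have hc' : Λ.deg c = (n - m) + (Λ.deg (Λ.comp x c) - n) := by
    rw [hc, add_comm]; exact (tsub_add_tsub_cancel hn hmn).symm
  obtain ⟨⟨b, y⟩, ⟨hb, -, hby, rfl⟩, -⟩ := Λ.factor c _ _ hc'
  rw [Λ.seg_eq_of_eq_comp hx hb (by rwa [Λ.rng_comp _ _ hby] at hxc) hby rfl, hb]

end Factorization

def openCube (m : Fin k → ℕ) : Set (Fin k → ℝ) :=
  {t | (∀ i, 0 ≤ t i ∧ t i ≤ (m i : ℝ)) ∧ (∀ i, m i = 1 → 0 < t i ∧ t i < 1)}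

theorem mem_openCube_iff {m : Fin k → ℕ} (hm : m ≤ 1) {t : Fin k → ℝ} :
    t ∈ openCube m ↔ ∀ i, (m i = 0 ∧ t i = 0) ∨ (m i = 1 ∧ t i ∈ Ioo 0 1) := by
  refine ⟨fun ⟨hb, hc⟩ i => ?_, fun h => ⟨fun i => ?_, fun i hi => ?_⟩⟩
  · rcases Nat.le_one_iff_eq_zero_or_eq_one.mp (hm i) with h0 | h1
    · have := hb i
      rw [h0, Nat.cast_zero] at this
      exact Or.inl ⟨h0, le_antisymm this.2 this.1⟩
    · exact Or.inr ⟨h1, hc i h1⟩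
  · rcases h i with ⟨h0, ht⟩ | ⟨h1, ht⟩
    · simp [h0, ht]
    · rw [h1, Nat.cast_one]; exact ⟨ht.1.le, ht.2.le⟩
  · rcases h i with ⟨h0, -⟩ | ⟨-, ht⟩
    · omega
    · exact ht

theorem fl_ce_frac_cases {t : Fin k → ℝ} {i : Fin k} (ht : 0 ≤ t i) :
    (ce t i = fl t i ∧ frac t i = 0) ∨ (ce t i = fl t i + 1 ∧ frac t i ∈ Ioo 0 1) := by
  simp only [fl, ce, frac, Int.floor_toNat, Int.ceil_toNat]
  by_cases hint : t i = ⌊t i⌋₊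
  · left
    rw [hint, Nat.floor_natCast, Nat.ceil_natCast]
    simp
  · right
    have hlt : (⌊t i⌋₊ : ℝ) < t i := (Nat.floor_le ht).lt_of_ne (Ne.symm hint)
    have hlt' : t i < ⌊t i⌋₊ + 1 := Nat.lt_floor_add_one (t i)
    refine ⟨(Nat.ceil_eq_iff (Nat.succ_ne_zero _)).2 ⟨by simpa using hlt, by
      push_cast; exact hlt'.le⟩, by linarith, by linarith⟩

theorem fl_le_ce {t : Fin k → ℝ} (ht : ∀ i, 0 ≤ t i) : fl t ≤ ce t := fun i => by
  show fl t i ≤ ce t i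
  rcases fl_ce_frac_cases (ht i) with ⟨h, -⟩ | ⟨h, -⟩ <;> omega

theorem ce_le_of_le {t : Fin k → ℝ} {m : Fin k → ℕ} (ht : ∀ i, t i ≤ m i) : ce t ≤ m :=
  fun i => by simpa [ce, Int.ceil_toNat] using Nat.ceil_le.2 (ht i)

theorem frac_mem_openCube {t : Fin k → ℝ} (ht : ∀ i, 0 ≤ t i) :
    ce t - fl t ≤ 1 ∧ frac t ∈ openCube (ce t - fl t) := by
  have hle : ce t - fl t ≤ 1 := fun i => by
    rcases fl_ce_frac_cases (ht i) with ⟨h, -⟩ | ⟨h, -⟩ <;> simp [h]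
  refine ⟨hle, (mem_openCube_iff hle).2 fun i => ?_⟩
  rcases fl_ce_frac_cases (ht i) with ⟨h, hf⟩ | ⟨h, hf⟩
  · exact Or.inl ⟨by simp [h], hf⟩
  · exact Or.inr ⟨by simp [h], hf⟩

theorem fl_ce_of_mem_openCube {m : Fin k → ℕ} (hm : m ≤ 1) {t : Fin k → ℝ}
    (ht : t ∈ openCube m) : fl t = 0 ∧ ce t = m := by
  simp only [funext_iff, fl, ce, Int.floor_toNat, Int.ceil_toNat, Pi.zero_apply,
    ← forall_and]
  intro i
  rcases (mem_openCube_iff hm).1 ht i with ⟨h0, ht0⟩ | ⟨h1, ht1⟩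
  · simp [h0, ht0]
  · exact ⟨Nat.floor_eq_zero.2 ht1.2,
      h1 ▸ (Nat.ceil_eq_iff one_ne_zero).2 ⟨by simpa using ht1.1, by simpa using ht1.2.le⟩⟩

theorem frac_eq_self_of_mem_openCube {m : Fin k → ℕ} (hm : m ≤ 1) {t : Fin k → ℝ}
    (ht : t ∈ openCube m) : frac t = t := by
  funext i
  show t i - (fl t i : ℝ) = t i
  simp [(fl_ce_of_mem_openCube hm ht).1]

theorem card_eq_one_eq_sum_of_le_one {ι : Type*} [Fintype ι] {m : ι → ℕ} (hm : m ≤ 1) :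
    Fintype.card {i // m i = 1} = ∑ i, m i := by
  rw [Fintype.card_subtype, Finset.card_filter]
  refine Finset.sum_congr rfl fun i _ => ?_
  rcases Nat.le_one_iff_eq_zero_or_eq_one.mp (hm i) with h | h <;> simp [h]

noncomputable def openCubeHomeoUnitCube (m : Fin k → ℕ) (hm : m ≤ 1) :
    openCube m ≃ₜ {u : Fin (∑ i, m i) → ℝ | ∀ j, 0 < u j ∧ u j < 1} :=
  let e : Fin (∑ i, m i) ≃ {i // m i = 1} :=
    (Fintype.equivFinOfCardEq (card_eq_one_eq_sum_of_le_one hm)).symm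
  { toFun t := ⟨fun j => t.1 (e j), fun j => t.2.2 _ (e j).2⟩
    invFun u := ⟨fun i => if h : m i = 1 then u.1 (e.symm ⟨i, h⟩) else 0,
      (mem_openCube_iff hm).2 fun i => by
        rcases Nat.le_one_iff_eq_zero_or_eq_one.mp (hm i) with h | h
        · simp [h]
        · simpa [h] using u.2 _⟩
    left_inv t := Subtype.ext <| funext fun i => by
      rcases (mem_openCube_iff hm).1 t.2 i with ⟨h, ht⟩ | ⟨h, -⟩
      · simp [h, ht]
      · simp [h]
    right_inv u := Subtype.ext <| funext fun j => by simp [(e j).2]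
    continuous_toFun := by
      refine Continuous.subtype_mk (continuous_pi fun j => ?_) _
      exact (continuous_apply _).comp continuous_subtype_val
    continuous_invFun := by
      refine Continuous.subtype_mk (continuous_pi fun i => ?_) _
      split_ifs
      · exact (continuous_apply _).comp continuous_subtype_val
      · exact continuous_const }

section Realization

variable (Λ : KGraph k)

theorem seg_fl_ce_of_mem_openCube {lam : Λ.Mor} (hle : Λ.deg lam ≤ 1) {t : Fin k → ℝ}
    (ht : t ∈ openCube (Λ.deg lam)) : Λ.seg lam (fl t) (ce t) = lam := by
  obtain ⟨hfl, hce⟩ := fl_ce_of_mem_openCube hle ht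
  rw [hfl, hce, Λ.seg_zero_deg]

theorem exists_mem_qcube (x : Λ.Real) : ∃ lam, Λ.deg lam ≤ 1 ∧ x ∈ Λ.Qcube lam := by
  induction x using Quotient.ind with
  | _ p =>
    obtain ⟨a, t, ht⟩ := p
    have ht0 : ∀ i, 0 ≤ t i := fun i => (ht i).1
    have hdeg : Λ.deg (Λ.seg a (fl t) (ce t)) = ce t - fl t :=
      Λ.deg_seg (fl_le_ce ht0) (ce_le_of_le fun i => (ht i).2)
    obtain ⟨hle, hmem⟩ := frac_mem_openCube ht0
    rw [← hdeg] at hle hmem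
    refine ⟨_, hle, frac t, hmem.1, hmem.2, Quotient.sound ⟨?_, ?_⟩⟩
    · exact (Λ.seg_fl_ce_of_mem_openCube hle hmem).symm
    · exact (frac_eq_self_of_mem_openCube hle hmem).symm

theorem eq_of_pt_eq {lam mu : Λ.Mor} (hlam : Λ.deg lam ≤ 1) (hmu : Λ.deg mu ≤ 1)
    {t u : Fin k → ℝ} (ht : t ∈ openCube (Λ.deg lam)) (hu : u ∈ openCube (Λ.deg mu))
    (h : Λ.pt lam t ht.1 = Λ.pt mu u hu.1) : lam = mu ∧ t = u := by
  obtain ⟨hseg, hfrac⟩ : Λ.ptRel _ _ := Quotient.exact h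
  rw [Λ.seg_fl_ce_of_mem_openCube hlam ht, Λ.seg_fl_ce_of_mem_openCube hmu hu] at hseg
  rw [frac_eq_self_of_mem_openCube hlam ht, frac_eq_self_of_mem_openCube hmu hu] at hfrac
  exact ⟨hseg, hfrac⟩

theorem coe_frac (t : Fin k → ℝ) (i : Fin k) : ((frac t i : ℝ) : AddCircle (1 : ℝ)) = t i := by
  rw [frac, AddCircle.coe_sub, sub_eq_self, AddCircle.coe_eq_zero_iff]
  exact ⟨(⌊t i⌋.toNat : ℤ), by rw [zsmul_one, Int.cast_natCast]⟩

def angle : Λ.Real → Fin k → AddCircle (1 : ℝ) :=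
  Quotient.lift (fun p i => (p.2.1 i : AddCircle (1 : ℝ))) fun p q h => funext fun i => by
    rw [← coe_frac, ← coe_frac q.2.1, (h : Λ.ptRel p q).2]

theorem continuous_angle : Continuous Λ.angle :=
  Continuous.quotient_lift (continuous_sigma fun _ => continuous_pi fun i =>
    continuous_quotient_mk'.comp ((continuous_apply i).comp continuous_subtype_val)) _

theorem angle_pt (a : Λ.Mor) (t : Fin k → ℝ) (h : ∀ i, 0 ≤ t i ∧ t i ≤ (Λ.deg a i : ℝ)) :
    Λ.angle (Λ.pt a t h) = fun i => (t i : AddCircle (1 : ℝ)) :=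
  rfl

noncomputable def cubeCoord (lam : Λ.Mor) (x : Λ.Real) : Fin k → ℝ := fun i =>
  if Λ.deg lam i = 1 then (AddCircle.equivIco 1 0 (Λ.angle x i) : ℝ) else 0

theorem cubeCoord_pt {lam : Λ.Mor} (hle : Λ.deg lam ≤ 1) {t : Fin k → ℝ}
    (ht : t ∈ openCube (Λ.deg lam)) : Λ.cubeCoord lam (Λ.pt lam t ht.1) = t := by
  funext i
  rcases (mem_openCube_iff hle).1 ht i with ⟨h0, ht0⟩ | ⟨h1, ht1⟩
  · simp [cubeCoord, h0, ht0]
  · simp only [cubeCoord, h1, if_true, angle_pt]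
    exact AddCircle.equivIco_coe_of_mem ⟨ht1.1.le, by simpa using ht1.2⟩

theorem continuousAt_cubeCoord {lam : Λ.Mor} {x : Λ.Real} (hx : x ∈ Λ.Qcube lam) :
    ContinuousAt (Λ.cubeCoord lam) x := by
  obtain ⟨t, ht, hc, rfl⟩ := hx
  refine continuousAt_pi.2 fun i => ?_
  by_cases h1 : Λ.deg lam i = 1
  · have hne : Λ.angle (Λ.pt lam t ht) i ≠ (0 : ℝ) := by
      rw [angle_pt, Ne, AddCircle.coe_eq_coe_iff_of_mem_Ico (a := 0)
        ⟨(hc i h1).1.le, by simpa using (hc i h1).2⟩ ⟨le_rfl, by simp⟩]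
      exact (hc i h1).1.ne'
    simp only [cubeCoord, h1, if_true]
    have hangle : ContinuousAt (fun y => Λ.angle y i) (Λ.pt lam t ht) :=
      ((continuous_apply i).comp Λ.continuous_angle).continuousAt
    exact continuous_subtype_val.continuousAt.comp <|
      ContinuousAt.comp (f := fun y => Λ.angle y i) (AddCircle.continuousAt_equivIco _ _ hne) hangle
  · simp only [cubeCoord, h1, if_false]
    exact continuousAt_const

noncomputable def cubeHomeo (lam : Λ.Mor) (hle : Λ.deg lam ≤ 1) :
    openCube (Λ.deg lam) ≃ₜ Λ.Qcube lam where
  toFun t := ⟨Λ.pt lam t t.2.1, t, t.2.1, t.2.2, rfl⟩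
  invFun x := ⟨Λ.cubeCoord lam x, by
    obtain ⟨x, t, ht, hc, rfl⟩ := x
    rw [Λ.cubeCoord_pt hle ⟨ht, hc⟩]
    exact ⟨ht, hc⟩⟩
  left_inv t := Subtype.ext (Λ.cubeCoord_pt hle t.2)
  right_inv := by
    rintro ⟨x, t, ht, hc, rfl⟩
    exact Subtype.ext (congrArg (Quotient.mk _) (Sigma.ext rfl
      (heq_of_eq (Subtype.ext (Λ.cubeCoord_pt hle ⟨ht, hc⟩)))))
  continuous_toFun := ((continuous_quot_mk (r := Λ.ptSetoid.r)).comp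
    (continuous_sigmaMk.comp (continuous_subtype_val.subtype_mk _))).subtype_mk _
  continuous_invFun := by
    refine Continuous.subtype_mk ?_ _
    exact ContinuousOn.domRestrict fun _ hx => (Λ.continuousAt_cubeCoord hx).continuousWithinAt

end Realization

end KGraph

/-- `X_Λ` is the union of the open cubes `Q_λ` over `λ` with
`d(λ) ≤ 1_k`; these cubes are pairwise disjoint; and for each such `λ` the map
`[λ,t] ↦ t` is a homeomorphism of `Q_λ` onto the relatively open cube
`(0, d(λ)) ⊆ ℝᵏ` — in particular `Q_λ` is homeomorphic to the open unit cube in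
`ℝ^{|d(λ)|}`. -/
theorem open_cubes_partition_and_homeo (k : ℕ) (Λ : KGraph k) :
    (⋃ lam ∈ { lam : Λ.Mor | Λ.deg lam ≤ 1 }, Λ.Qcube lam) = Set.univ ∧
    ({ lam : Λ.Mor | Λ.deg lam ≤ 1 }.PairwiseDisjoint Λ.Qcube) ∧
    (∀ lam : Λ.Mor, Λ.deg lam ≤ 1 →
      (∃ h : ↥(Λ.Qcube lam) ≃ₜ
          ↥{ t : Fin k → ℝ | (∀ i, 0 ≤ t i ∧ t i ≤ (Λ.deg lam i : ℝ)) ∧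
              (∀ i, Λ.deg lam i = 1 → 0 < t i ∧ t i < 1) },
        ∀ (t : Fin k → ℝ) (hb : ∀ i, 0 ≤ t i ∧ t i ≤ (Λ.deg lam i : ℝ))
          (hc : ∀ i, Λ.deg lam i = 1 → 0 < t i ∧ t i < 1)
          (hm : Λ.pt lam t hb ∈ Λ.Qcube lam),
          (h ⟨Λ.pt lam t hb, hm⟩).1 = t) ∧
      Nonempty (↥(Λ.Qcube lam) ≃ₜ
        ↥{ t : Fin (∑ i, Λ.deg lam i) → ℝ | ∀ i, 0 < t i ∧ t i < 1 })) := by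
  refine ⟨?_, ?_, fun lam hle => ⟨⟨(Λ.cubeHomeo lam hle).symm,
    fun t hb hc _ => Λ.cubeCoord_pt hle ⟨hb, hc⟩⟩,
    ⟨(Λ.cubeHomeo lam hle).symm.trans (KGraph.openCubeHomeoUnitCube _ hle)⟩⟩⟩
  · refine Set.eq_univ_of_forall fun x => ?_
    obtain ⟨lam, hle, hx⟩ := Λ.exists_mem_qcube x
    exact Set.mem_biUnion hle hx
  · intro lam hlam mu hmu hne
    refine Set.disjoint_left.2 ?_
    rintro _ ⟨t, ht, hc, rfl⟩ ⟨u, hu, hc', heq⟩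
    exact hne (Λ.eq_of_pt_eq hlam hmu ⟨ht, hc⟩ ⟨hu, hc'⟩ heq).1
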